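/- arXiv:2402.00475 — 3 statements merged into one kernel-verified Lean document; each statement's English description precedes it below -/
import Mathlib

section
/- Let A, B ∈ ℝ² be distinct, s ≠ 0, and let M be a smooth point of the Cartesian oval ±‖A−M‖ + s‖B−M‖ = t with M ≠ A, M ≠ B. Let G(M) = ±‖A−M‖ + s‖B−M‖ − t, so ∇G(M) spans the normal direction at M. If α ∈ [0,π] is the angle between the lines spanned by A−M and ∇G(M)ᗮ-complement (i.e., the angle between A−M and the normal line), and β is the angle between B−M and the normal line, then sin α / sin β = |s|. -/
open scoped RealInnerProductSpace

/-- Rotation by π/2 radians in the plane. -/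
noncomputable def iota (v : EuclideanSpace ℝ (Fin 2)) : EuclideanSpace ℝ (Fin 2) :=
  WithLp.toLp 2 ![-(v 1), v 0]

theorem cartesian_oval_normal_sines (A B M : EuclideanSpace ℝ (Fin 2)) (s t ε : ℝ)
    (hAB : A ≠ B) (hs : s ≠ 0) (hε : ε = 1 ∨ ε = -1)
    (hMA : M ≠ A) (hMB : M ≠ B)
    (hM : ε * ‖A - M‖ + s * ‖B - M‖ = t)
    (g : EuclideanSpace ℝ (Fin 2))
    (hg : g = (ε / ‖A - M‖) • (M - A) + (s / ‖B - M‖) • (M - B))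
    (hg0 : g ≠ 0)
    (sinα sinβ : ℝ)
    (hα : sinα = |⟪iota (A - M), g⟫| / (‖A - M‖ * ‖g‖))
    (hβ : sinβ = |⟪iota (B - M), g⟫| / (‖B - M‖ * ‖g‖))
    (hβ0 : sinβ ≠ 0) :
    sinα / sinβ = |s| := by
  have hr1 : (0:ℝ) < ‖A - M‖ := by
    rw [norm_pos_iff, sub_ne_zero]; exact fun h => hMA h.symm
  have hr2 : (0:ℝ) < ‖B - M‖ := by
    rw [norm_pos_iff, sub_ne_zero]; exact fun h => hMB h.symm
  set D : ℝ := (A - M) 1 * (B - M) 0 - (A - M) 0 * (B - M) 1 with hD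
  have hia : ⟪iota (A - M), g⟫ = (s / ‖B - M‖) * D := by
    simp only [iota, hg, PiLp.inner_apply, PiLp.toLp_apply, Fin.sum_univ_two, PiLp.add_apply,
      PiLp.smul_apply, PiLp.sub_apply, Matrix.cons_val_zero, Matrix.cons_val_one,
      Matrix.head_cons, RCLike.inner_apply, conj_trivial, smul_eq_mul, hD]
    field_simp
    ring
  have hib : ⟪iota (B - M), g⟫ = -(ε / ‖A - M‖) * D := by
    simp only [iota, hg, PiLp.inner_apply, PiLp.toLp_apply, Fin.sum_univ_two, PiLp.add_apply,
      PiLp.smul_apply, PiLp.sub_apply, Matrix.cons_val_zero, Matrix.cons_val_one,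
      Matrix.head_cons, RCLike.inner_apply, conj_trivial, smul_eq_mul, hD]
    field_simp
    ring
  have hε1 : |ε| = 1 := by rcases hε with h | h <;> simp [h]
  rw [hia] at hα
  rw [hib] at hβ
  rw [abs_mul, abs_div, abs_of_pos hr2] at hα
  rw [abs_mul, abs_neg, abs_div, hε1, abs_of_pos hr1] at hβ
  have hDne : |D| ≠ 0 := by
    intro h
    apply hβ0
    rw [hβ, h]
    simp
  have hgn : (0:ℝ) < ‖g‖ := norm_pos_iff.mpr hg0
  rw [hα, hβ]
  field_simp
end

section
/- Let C be a circle with center O ∈ ℝ² and radius r > 0, and let A ∈ ℝ² be a point with ‖A−O‖ ≠ r and A ≠ O. Define B := A + (1 − r²/‖A−O‖²)(O−A). For any point R on C not on the line through A and O, the unique circle through A and R that is tangent at R to the line through R and O also passes through B. -/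
/-!
`B` is the inverse of `A` in `C`. Since `OR ⟂ RE`, Pythagoras gives `‖O - E‖² - γ² = r²`: the power
of `O` with respect to the circle through `A` and `R` is `r²`. A circle with respect to which the
centre of inversion has power `r²` is mapped to itself by the inversion, so it contains the inverse
of each of its points.
-/

open scoped RealInnerProductSpace

namespace EuclideanGeometry.Sphere

variable {V P : Type*} [NormedAddCommGroup V] [InnerProductSpace ℝ V] [MetricSpace P]
  [NormedAddTorsor V P]

theorem power_eq_dist_sq_of_inner_eq_zero {s : Sphere P} {p t : P} (ht : t ∈ s)
    (h : ⟪t -ᵥ p, t -ᵥ s.center⟫ = 0) : s.power p = dist p t ^ 2 := by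
  have hpyth := norm_sub_sq_eq_norm_sq_add_norm_sq_real ((real_inner_comm _ _).trans h)
  rw [vsub_sub_vsub_cancel_left] at hpyth
  rw [power, ← mem_sphere.mp ht, dist_eq_norm_vsub V, dist_eq_norm_vsub V, dist_eq_norm_vsub' V]
  linear_combination hpyth

theorem inversion_mem_of_power_eq_sq {s : Sphere P} {a c : P} {R : ℝ} (ha : a ∈ s)
    (hc : s.power c = R ^ 2) : inversion c R a ∈ s := by
  set v := a -ᵥ c
  set w := c -ᵥ s.center
  -- `R ^ 2 / 0 = 0` is harmless: `a = c` forces `R ^ 2 = s.power a = 0`.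
  have hscale : (R / ‖v‖) ^ 2 * ‖v‖ ^ 2 = R ^ 2 := by
    rcases eq_or_ne ‖v‖ 0 with hv | hv
    · have hac : a = c := by simpa [v] using hv
      rw [← hc, ← hac, (power_eq_zero_iff_mem_sphere (radius_nonneg_of_mem ha)).mpr ha, hv]
      ring
    · field_simp
  have ha' : ‖v‖ ^ 2 + 2 * ⟪v, w⟫ + ‖w‖ ^ 2 = s.radius ^ 2 := by
    rw [← norm_add_sq_real, vsub_add_vsub_cancel, ← dist_eq_norm_vsub V, mem_sphere.mp ha]
  have hc' : ‖w‖ ^ 2 - s.radius ^ 2 = R ^ 2 := by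
    rw [← hc, power, dist_eq_norm_vsub V]
  rw [mem_sphere, dist_eq_norm_vsub V, inversion, dist_eq_norm_vsub V a c, vadd_vsub_assoc,
    ← sq_eq_sq₀ (norm_nonneg _) (radius_nonneg_of_mem ha), norm_add_sq_real, norm_smul, mul_pow,
    Real.norm_eq_abs, sq_abs, real_inner_smul_left]
  linear_combination
    (1 - (R / ‖v‖) ^ 2) * hc' + ((R / ‖v‖) ^ 2 - 1) * hscale + (R / ‖v‖) ^ 2 * ha'

end EuclideanGeometry.Sphere

open EuclideanGeometry

theorem tangent_circle_through_inverse_point_general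
    (A O : EuclideanSpace ℝ (Fin 2)) (r : ℝ)
    (B : EuclideanSpace ℝ (Fin 2))
    (hB : B = A + (1 - r ^ 2 / ‖A - O‖ ^ 2) • (O - A))
    (R : EuclideanSpace ℝ (Fin 2)) (hR : ‖R - O‖ = r)
    (E : EuclideanSpace ℝ (Fin 2)) (γ : ℝ)
    (hAE : ‖A - E‖ = γ) (hRE : ‖R - E‖ = γ)
    (htang : ⟪R - O, R - E⟫ = 0) :
    ‖B - E‖ = γ := by
  let s : Sphere (EuclideanSpace ℝ (Fin 2)) := ⟨E, γ⟩
  have hAs : A ∈ s := by rwa [mem_sphere, dist_eq_norm]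
  have hRs : R ∈ s := by rwa [mem_sphere, dist_eq_norm]
  have hpower : s.power O = r ^ 2 := by
    rw [s.power_eq_dist_sq_of_inner_eq_zero hRs htang, dist_comm, dist_eq_norm, hR]
  have hinv : B = inversion O r A := by
    rw [hB, inversion, dist_eq_norm, div_pow, vadd_eq_add, vsub_eq_sub]
    module
  rw [hinv, ← dist_eq_norm]
  exact Sphere.inversion_mem_of_power_eq_sq hAs hpower

theorem tangent_circle_through_inverse_point
    (A O : EuclideanSpace ℝ (Fin 2)) (r : ℝ) (hr : 0 < r)
    (hAO : A ≠ O) (hAr : ‖A - O‖ ≠ r)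
    (B : EuclideanSpace ℝ (Fin 2))
    (hB : B = A + (1 - r ^ 2 / ‖A - O‖ ^ 2) • (O - A))
    (R : EuclideanSpace ℝ (Fin 2)) (hR : ‖R - O‖ = r)
    (hRline : ¬ Collinear ℝ ({A, O, R} : Set (EuclideanSpace ℝ (Fin 2))))
    (E : EuclideanSpace ℝ (Fin 2)) (γ : ℝ)
    (hAE : ‖A - E‖ = γ) (hRE : ‖R - E‖ = γ)
    (htang : ⟪R - O, R - E⟫ = 0) :
    ‖B - E‖ = γ :=
  tangent_circle_through_inverse_point_general A O r B hB R hR E γ hAE hRE htang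
end

section
/- (Tangent-chord angle) Let A, B, C be distinct points on a circle with center O. Let D be a point on the tangent line to the circle at C lying in the open half-plane determined by line BC that does not contain A. Then ∠BAC = ∠BCD. -/
/-!
Modulo `π`, both `∡ B A C` and `∡ B C D` equal `∡ B C O + π / 2`: the first by the inscribed angle
theorem applied to the isosceles triangle `B O C`, the second because the radius `O C` is
perpendicular to the tangent `C D`. Since `A` and `D` lie on opposite sides of `B C`, the two
oriented angles also have the same nonzero sign, so they are equal, and so are the unoriented ones.
-/

open EuclideanGeometry
open scoped Real RealInnerProductSpace

namespace EuclideanGeometry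

variable {V P : Type*} [NormedAddCommGroup V] [InnerProductSpace ℝ V] [MetricSpace P]
  [NormedAddTorsor V P] [Fact (Module.finrank ℝ V = 2)] [Module.Oriented ℝ V (Fin 2)]

theorem two_zsmul_oangle_eq_pi_of_angle_eq_pi_div_two {p₁ p₂ p₃ : P} (hp₁ : p₁ ≠ p₂)
    (hp₃ : p₃ ≠ p₂) (h : ∠ p₁ p₂ p₃ = π / 2) : (2 : ℤ) • ∡ p₁ p₂ p₃ = π := by
  rw [Real.Angle.two_zsmul_eq_pi_iff, neg_div, ← h]
  exact oangle_eq_angle_or_eq_neg_angle hp₁ hp₃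

theorem angle_eq_angle_of_two_zsmul_oangle_eq {p₁ p₂ p₃ p₄ p₅ p₆ : P}
    (h : (2 : ℤ) • ∡ p₁ p₂ p₃ = (2 : ℤ) • ∡ p₄ p₅ p₆)
    (hs : (∡ p₁ p₂ p₃).sign = (∡ p₄ p₅ p₆).sign) (h₀ : (∡ p₁ p₂ p₃).sign ≠ 0) :
    ∠ p₁ p₂ p₃ = ∠ p₄ p₅ p₆ := by
  have h₀' : (∡ p₄ p₅ p₆).sign ≠ 0 := hs ▸ h₀
  exact (angle_eq_iff_oangle_eq_of_sign_eq (left_ne_of_oangle_sign_ne_zero h₀)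
    (right_ne_of_oangle_sign_ne_zero h₀) (left_ne_of_oangle_sign_ne_zero h₀')
    (right_ne_of_oangle_sign_ne_zero h₀') hs).2 ((Real.Angle.two_zsmul_eq_iff_eq h₀ hs).1 h)

theorem oangle_sign_eq_of_sOppSide_line {p₁ p₂ p₃ t : P}
    (h : line[ℝ, p₁, p₃].SOppSide t p₂) : (∡ p₁ p₂ p₃).sign = (∡ p₁ p₃ t).sign := by
  rw [← oangle_swap₁₃_sign p₃ p₂ p₁,
    h.oangle_sign_eq_neg (right_mem_affineSpan_pair ℝ p₁ p₃) (left_mem_affineSpan_pair ℝ p₁ p₃),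
    neg_neg, oangle_rotate_sign]

namespace Sphere

theorem oangle_sign_ne_zero {s : Sphere P} {p₁ p₂ p₃ : P} (hp₁ : p₁ ∈ s) (hp₂ : p₂ ∈ s)
    (hp₃ : p₃ ∈ s) (hp₁p₂ : p₁ ≠ p₂) (hp₁p₃ : p₁ ≠ p₃) (hp₂p₃ : p₂ ≠ p₃) :
    (∡ p₁ p₂ p₃).sign ≠ 0 :=
  Real.Angle.sign_ne_zero_iff.2 <| oangle_ne_zero_and_ne_pi_iff_affineIndependent.2 <|
    s.cospherical.affineIndependent_of_mem_of_ne hp₁ hp₂ hp₃ hp₁p₂ hp₁p₃ hp₂p₃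

theorem IsTangentAt.two_zsmul_oangle_eq {s : Sphere P} {as : AffineSubspace ℝ P}
    {p₁ p₂ p₃ t : P} (h : s.IsTangentAt p₃ as) (ht : t ∈ as) (htp₃ : t ≠ p₃) (hp₁ : p₁ ∈ s)
    (hp₂ : p₂ ∈ s) (hp₂p₁ : p₂ ≠ p₁) (hp₂p₃ : p₂ ≠ p₃) (hp₁p₃ : p₁ ≠ p₃) :
    (2 : ℤ) • ∡ p₁ p₂ p₃ = (2 : ℤ) • ∡ p₁ p₃ t := by
  have hp₃ := h.mem_sphere
  have hcp₃ : s.center ≠ p₃ := (ne_center_of_mem_of_mem_of_ne hp₃ hp₁ hp₁p₃.symm).symm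
  have hright : (2 : ℤ) • ∡ s.center p₃ t = π :=
    two_zsmul_oangle_eq_pi_of_angle_eq_pi_div_two hcp₃ htp₃
      (by rw [angle_comm]; exact h.angle_eq_pi_div_two ht)
  have hinscribed : (2 : ℤ) • ∡ p₁ p₃ s.center + (2 : ℤ) • ∡ p₃ p₂ p₁ = π :=
    two_zsmul_oangle_center_add_two_zsmul_oangle_eq_pi hp₃ hp₂ hp₁ hp₂p₃ hp₂p₁ hp₁p₃.symm
  calc (2 : ℤ) • ∡ p₁ p₂ p₃
      = (2 : ℤ) • ∡ p₁ p₃ s.center - π := by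
        rw [oangle_rev, ← hinscribed]; abel
    _ = (2 : ℤ) • ∡ p₁ p₃ s.center + (2 : ℤ) • ∡ s.center p₃ t := by
        rw [hright, sub_eq_add_neg, Real.Angle.neg_coe_pi]
    _ = (2 : ℤ) • ∡ p₁ p₃ t := by
        rw [← smul_add, oangle_add hp₁p₃ hcp₃ htp₃]

end Sphere

end EuclideanGeometry

theorem tangent_chord_angle_general (A B C O D : EuclideanSpace ℝ (Fin 2)) (r : ℝ)
    (hA : dist A O = r) (hB : dist B O = r) (hC : dist C O = r)
    (hAB : A ≠ B) (hAC : A ≠ C) (hBC : B ≠ C)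
    (hD : ⟪D - C, C - O⟫ = 0)
    (hside : (affineSpan ℝ ({B, C} : Set (EuclideanSpace ℝ (Fin 2)))).SOppSide D A) :
    ∠ B A C = ∠ B C D := by
  have : Fact (Module.finrank ℝ (EuclideanSpace ℝ (Fin 2)) = 2) := ⟨finrank_euclideanSpace_fin⟩
  have : Module.Oriented ℝ (EuclideanSpace ℝ (Fin 2)) (Fin 2) :=
    ⟨(EuclideanSpace.basisFun (Fin 2) ℝ).toBasis.orientation⟩
  let s : Sphere (EuclideanSpace ℝ (Fin 2)) := ⟨O, r⟩
  have hDC : D ≠ C := by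
    rintro rfl
    exact hside.left_notMem (right_mem_affineSpan_pair ℝ B D)
  have htangent : s.IsTangentAt C (s.orthRadius C) := Sphere.isTangentAt_orthRadius_iff_mem.2 hC
  have hDtangent : D ∈ s.orthRadius C := by
    rw [Sphere.mem_orthRadius_iff_inner_left, vsub_eq_sub, vsub_eq_sub]
    exact hD
  exact angle_eq_angle_of_two_zsmul_oangle_eq
    (htangent.two_zsmul_oangle_eq hDtangent hDC hB hA hAB hAC hBC)
    (oangle_sign_eq_of_sOppSide_line hside)
    (Sphere.oangle_sign_ne_zero (s := s) hB hA hC hAB.symm hBC hAC)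

theorem tangent_chord_angle (A B C O D : EuclideanSpace ℝ (Fin 2)) (r : ℝ) (hr : 0 < r)
    (hA : dist A O = r) (hB : dist B O = r) (hC : dist C O = r)
    (hAB : A ≠ B) (hAC : A ≠ C) (hBC : B ≠ C)
    (hD : ⟪D - C, C - O⟫ = 0) (hDC : D ≠ C)
    (hside : (affineSpan ℝ ({B, C} : Set (EuclideanSpace ℝ (Fin 2)))).SOppSide D A) :
    ∠ B A C = ∠ B C D :=
  tangent_chord_angle_general A B C O D r hA hB hC hAB hAC hBC hD hside
end
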